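/- Let H be a k-regular finite graph with |V(H)| ≥ 3 and χ_δ(H) ≥ 2, and let G = K₁ ∨ H be the join of a single vertex with H. If |V(H)| > k + 2, then χ_δ(G □ P₃) ≤ 2 χ_δ(H). -/

import Mathlib

open scoped Classical
open SimpleGraph

/-- The δ-complement of a graph: `u v` are adjacent iff they are distinct and
either they have equal degrees and are non-adjacent in `G`, or they have
different degrees and are adjacent in `G`. -/
def deltaComp {V : Type*} [Fintype V] (G : SimpleGraph V) : SimpleGraph V where
  Adj u v := u ≠ v ∧ ((G.degree u = G.degree v ∧ ¬ G.Adj u v) ∨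
    (G.degree u ≠ G.degree v ∧ G.Adj u v))
  symm := ⟨by
    intro u v h
    refine ⟨h.1.symm, ?_⟩
    rcases h.2 with ⟨hd, ha⟩ | ⟨hd, ha⟩
    · exact Or.inl ⟨hd.symm, fun hh => ha hh.symm⟩
    · exact Or.inr ⟨fun hh => hd hh.symm, ha.symm⟩⟩
  loopless := ⟨fun v h => h.1 rfl⟩

/-- The δ-chromatic number: chromatic number of the δ-complement. -/
noncomputable def deltaChrom {V : Type*} [Fintype V] (G : SimpleGraph V) : ℕ∞ :=
  (deltaComp G).chromaticNumber

/-- The join of a single new vertex with `H`: the cone over `H`. -/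
def coneGraph {V : Type*} (H : SimpleGraph V) : SimpleGraph (Option V) where
  Adj u v :=
    match u, v with
    | some a, some b => H.Adj a b
    | some _, none => True
    | none, some _ => True
    | none, none => False
  symm := ⟨by
    rintro (_ | a) (_ | b) h <;> simp_all
    exact h.symm⟩
  loopless := ⟨by
    rintro (_ | a) h <;> simp_all⟩

/-!
Since `H` is `k`-regular, its δ-complement is its complement `Hᶜ`. In `G □ P₃` the copies of the
apex have degree `|V| + 1` or `|V| + 2` and the copies of a vertex of `H` have degree `k + 2` or
`k + 3`; as `|V| > k + 2`, two vertices have equal degree exactly when both or neither are apex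
copies and both or neither lie in the middle layer, and δ-adjacency is complement- or
product-adjacency accordingly. Given a proper colouring `c` of `Hᶜ` by `n ≥ 2` colours and a
fixed-point-free permutation `σ` of them, colour `(a, 0)` by `c a` from a first palette, `(a, 1)`
and `(a, 2)` by `σ (c a)` and `c a` from a second one, and the three apex copies by `x₀` from the
second palette and by `x₀`, `σ x₀` from the first: `2n` colours in all.
-/

section

variable {V : Type*} [Fintype V]

theorem deltaComp_adj_iff {G : SimpleGraph V} {u v : V} :
    (deltaComp G).Adj u v ↔ if G.degree u = G.degree v then Gᶜ.Adj u v else G.Adj u v := by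
  unfold deltaComp
  split_ifs with h
  · simp [h]
  · simpa [h] using G.ne_of_adj

theorem deltaComp_eq_compl_of_isRegularOfDegree {G : SimpleGraph V} {k : ℕ}
    (hG : G.IsRegularOfDegree k) : deltaComp G = Gᶜ := by
  ext u v
  rw [deltaComp_adj_iff, if_pos (by rw [hG u, hG v])]

theorem coneGraph_degree_none (H : SimpleGraph V) :
    (coneGraph H).degree none = Fintype.card V := by
  rw [← card_neighborFinset_eq_degree, neighborFinset_eq_filter (coneGraph H),
    Finset.card_filter, Fintype.sum_option]
  simp [coneGraph]

theorem coneGraph_degree_some (H : SimpleGraph V) (a : V) :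
    (coneGraph H).degree (some a) = H.degree a + 1 := by
  rw [← card_neighborFinset_eq_degree, neighborFinset_eq_filter (coneGraph H),
    ← card_neighborFinset_eq_degree, neighborFinset_eq_filter H,
    Finset.card_filter, Fintype.sum_option]
  simp only [coneGraph, ↓reduceIte, add_comm, Nat.add_left_cancel_iff]
  exact (Finset.card_filter _ _).symm

theorem pathGraph_three_degree (i : Fin 3) :
    (pathGraph 3).degree i = if i = 1 then 2 else 1 := by
  rw [← card_neighborFinset_eq_degree, neighborFinset_eq_filter (pathGraph 3)]
  simp only [pathGraph_adj]
  fin_cases i <;> decide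

variable {H : SimpleGraph V} {k : ℕ}

theorem deltaComp_coneGraph_boxProd_pathGraph_three_adj_iff (hreg : H.IsRegularOfDegree k)
    (hk : k + 2 < Fintype.card V) {x y : Option V} {i j : Fin 3} :
    (deltaComp (coneGraph H □ pathGraph 3)).Adj (x, i) (y, j) ↔
      if (x.isSome ↔ y.isSome) ∧ (i = 1 ↔ j = 1) then
        (coneGraph H □ pathGraph 3)ᶜ.Adj (x, i) (y, j)
      else (coneGraph H □ pathGraph 3).Adj (x, i) (y, j) := by
  have hdeg : (coneGraph H).degree x + (pathGraph 3).degree i =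
      (coneGraph H).degree y + (pathGraph 3).degree j ↔
        (x.isSome ↔ y.isSome) ∧ (i = 1 ↔ j = 1) := by
    cases x <;> cases y <;>
      simp only [coneGraph_degree_none, coneGraph_degree_some, hreg _, pathGraph_three_degree] <;>
      split_ifs <;> simp_all <;> omega
  rw [deltaComp_adj_iff, degree_boxProd, degree_boxProd]
  simp only [hdeg]

variable {α : Type*}

def coneBoxPathColor (c : V → α) (σ : α → α) (x₀ : α) : Option V × Fin 3 → α ⊕ α
  | (none, i) => ![.inr x₀, .inl x₀, .inl (σ x₀)] i
  | (some a, i) => ![.inl (c a), .inr (σ (c a)), .inr (c a)] i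

theorem coneBoxPathColor_ne_of_adj (hreg : H.IsRegularOfDegree k)
    (hk : k + 2 < Fintype.card V) (C : Hᶜ.Coloring α) {σ : α → α} (hσ : Function.Injective σ)
    (hfix : ∀ c, σ c ≠ c) (x₀ : α) {p q : Option V × Fin 3}
    (hpq : (deltaComp (coneGraph H □ pathGraph 3)).Adj p q) :
    coneBoxPathColor C σ x₀ p ≠ coneBoxPathColor C σ x₀ q := by
  have hC {a b : V} (h : a ≠ b ∧ ¬H.Adj a b) : C a ≠ C b := C.valid ((compl_adj H a b).2 h)
  have hfix' (c : α) : c ≠ σ c := (hfix c).symm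
  obtain ⟨_ | a, i⟩ := p <;> obtain ⟨_ | b, j⟩ := q <;>
    rw [deltaComp_coneGraph_boxProd_pathGraph_three_adj_iff hreg hk] at hpq <;>
    fin_cases i <;> fin_cases j <;>
    simp_all [coneBoxPathColor, boxProd_adj, pathGraph_adj, coneGraph, hσ.eq_iff]

def coneBoxPathColoring (hreg : H.IsRegularOfDegree k) (hk : k + 2 < Fintype.card V)
    (C : Hᶜ.Coloring α) {σ : α → α} (hσ : Function.Injective σ) (hfix : ∀ c, σ c ≠ c) (x₀ : α) :
    (deltaComp (coneGraph H □ pathGraph 3)).Coloring (α ⊕ α) :=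
  Coloring.mk (coneBoxPathColor C σ x₀) (coneBoxPathColor_ne_of_adj hreg hk C hσ hfix x₀)

theorem deltaChrom_coneGraph_boxProd_pathGraph_three_le_two_mul_chromaticNumber_compl
    (hreg : H.IsRegularOfDegree k) (hk : k + 2 < Fintype.card V)
    (hH : 2 ≤ Hᶜ.chromaticNumber) :
    deltaChrom (coneGraph H □ pathGraph 3) ≤ 2 * Hᶜ.chromaticNumber := by
  obtain ⟨n, hn⟩ : ∃ n : ℕ, (n : ℕ∞) = Hᶜ.chromaticNumber :=
    ENat.ne_top_iff_exists.mp (chromaticNumber_ne_top_iff_exists.mpr ⟨_, Hᶜ.colorable_of_fintype⟩)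
  obtain ⟨m, rfl⟩ : ∃ m, n = m + 2 := Nat.exists_eq_add_of_le' (by exact_mod_cast hn ▸ hH)
  obtain ⟨C⟩ := chromaticNumber_le_iff_colorable.mp hn.ge
  have hfix (c : Fin (m + 2)) : finRotate _ c ≠ c :=
    Equiv.Perm.mem_support.mp (support_finRotate ▸ Finset.mem_univ c)
  have hcol := (coneBoxPathColoring hreg hk C (finRotate _).injective hfix 0).colorable
  rw [← hn]
  exact hcol.chromaticNumber_le.trans (by simp [two_mul])

end

theorem deltaChrom_cone_boxProd_path_three_le_general {V : Type*} [Fintype V]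
    (H : SimpleGraph V) (k : ℕ) (hreg : H.IsRegularOfDegree k)
    (hchi : 2 ≤ deltaChrom H)
    (hk : k + 2 < Fintype.card V) :
    deltaChrom (coneGraph H □ pathGraph 3) ≤ 2 * deltaChrom H := by
  have hH : deltaChrom H = Hᶜ.chromaticNumber :=
    congrArg chromaticNumber (deltaComp_eq_compl_of_isRegularOfDegree hreg)
  rw [hH] at hchi ⊢
  exact deltaChrom_coneGraph_boxProd_pathGraph_three_le_two_mul_chromaticNumber_compl hreg hk hchi

/-- For a `k`-regular graph `H` with at least `3` vertices, `χ_δ(H) ≥ 2` and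
`|V(H)| > k + 2`, the cone `G = K₁ ∨ H` satisfies `χ_δ(G □ P₃) ≤ 2 χ_δ(H)`. -/
theorem deltaChrom_cone_boxProd_path_three_le {V : Type*} [Fintype V]
    (H : SimpleGraph V) (k : ℕ) (hreg : H.IsRegularOfDegree k)
    (hcard : 3 ≤ Fintype.card V) (hchi : 2 ≤ deltaChrom H)
    (hk : k + 2 < Fintype.card V) :
    deltaChrom (coneGraph H □ pathGraph 3) ≤ 2 * deltaChrom H :=
  deltaChrom_cone_boxProd_path_three_le_general H k hreg hchi hk
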